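/- Let Y ∈ {0,1}^{n×m} be a binary matrix whose column-sum vector r = Yᵀe satisfies the power law r_g = r_max · g^(−α) for g = 1,…,m with r_max > 0 and α > 1, and let (σ1, p1, q1) be a principal singular triple of Y with σ1 > 0. Then the entries of q1 satisfy Σ_{i=2}^m q_{1i}² ≤ r_max(ζ(α) − 1)/σ1². -/

import Mathlib

open Matrix Finset

/-- Riemann zeta function for real `s > 1`: `ζ(s) = ∑_{j=1}^∞ j^(−s)`. -/
noncomputable def zetaR (s : ℝ) : ℝ := ∑' j : ℕ, ((j : ℝ) + 1) ^ (-s)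

/-- Euclidean (L2) norm of a vector. -/
noncomputable def enormL2 {k : ℕ} (v : Fin k → ℝ) : ℝ := Real.sqrt (∑ i, v i ^ 2)

/-!
Reading the equation `Yᵀ p₁ = σ₁ q₁` row by row, Cauchy–Schwarz bounds `(σ₁ q₁ᵢ)²` by
`(∑ᵤ Yᵤᵢ²) ‖p₁‖² = rᵢ`, because a binary entry equals its square and `‖p₁‖ = 1`.
Summing over `i ≥ 2` and comparing the power law with the series defining `ζ(α)`, whose
first term is `1`, gives the bound.
-/

theorem enormL2_sq {k : ℕ} (v : Fin k → ℝ) : enormL2 v ^ 2 = ∑ i, v i ^ 2 :=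
  Real.sq_sqrt (sum_nonneg fun i _ => sq_nonneg (v i))

theorem sum_sq_eq_one_of_enormL2_eq_one {k : ℕ} {v : Fin k → ℝ} (hv : enormL2 v = 1) :
    ∑ i, v i ^ 2 = 1 := by
  rw [← enormL2_sq, hv, one_pow]

theorem sq_transpose_mulVec_le_colSum_mul {ι κ : Type*} [Fintype ι] (Y : Matrix ι κ ℝ)
    (hbin : ∀ u i, Y u i = 0 ∨ Y u i = 1) (p : ι → ℝ) (i : κ) :
    (Yᵀ *ᵥ p) i ^ 2 ≤ (Yᵀ *ᵥ fun _ => 1) i * ∑ u, p u ^ 2 := by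
  have hsq : ∀ u, Y u i ^ 2 = Y u i := fun u => by
    rcases hbin u i with h | h <;> simp [h]
  calc (Yᵀ *ᵥ p) i ^ 2 = (∑ u, Y u i * p u) ^ 2 := rfl
    _ ≤ (∑ u, Y u i ^ 2) * ∑ u, p u ^ 2 := sum_mul_sq_le_sq_mul_sq _ _ _
    _ = (Yᵀ *ᵥ fun _ => 1) i * ∑ u, p u ^ 2 := by
      simp only [hsq, mulVec, dotProduct, transpose_apply, mul_one]

theorem summable_nat_add_one_rpow_neg {α : ℝ} (hα : 1 < α) :
    Summable fun j : ℕ => ((j : ℝ) + 1) ^ (-α) := by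
  have h := (summable_nat_add_iff 1).2 (Real.summable_nat_rpow.2 (neg_lt_neg hα))
  exact h.congr fun j => by push_cast; rfl

theorem sum_rpow_le_zetaR_sub_one {α : ℝ} (hα : 1 < α) {s : Finset ℕ} (hs : 0 ∉ s) :
    ∑ j ∈ s, ((j : ℝ) + 1) ^ (-α) ≤ zetaR α - 1 := by
  have h := (summable_nat_add_one_rpow_neg hα).sum_le_tsum (insert 0 s)
    fun j _ => Real.rpow_nonneg (by positivity) _
  rw [sum_insert hs] at h
  simp only [CharP.cast_eq_zero, zero_add, Real.one_rpow] at h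
  rw [zetaR]
  linarith

theorem sum_fin_rpow_le_zetaR_sub_one {α : ℝ} (hα : 1 < α) (m : ℕ) :
    ∑ i ∈ univ.filter (fun i : Fin m => (i : ℕ) ≠ 0), (((i : ℕ) : ℝ) + 1) ^ (-α)
      ≤ zetaR α - 1 := by
  have h := sum_rpow_le_zetaR_sub_one hα
    (s := (univ.filter fun i : Fin m => (i : ℕ) ≠ 0).map Fin.valEmbedding) (by simp)
  rwa [sum_map] at h

theorem tail_entries_q1_bound_general
    (n m : ℕ) (Y : Matrix (Fin n) (Fin m) ℝ)
    (hbin : ∀ u i, Y u i = 0 ∨ Y u i = 1)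
    (α rmax : ℝ) (hα : 1 < α) (hrmax : 0 < rmax)
    (r : Fin m → ℝ) (hrdef : r = Yᵀ.mulVec (fun _ => 1))
    (hpow : ∀ g : Fin m, r g = rmax * (((g : ℕ) : ℝ) + 1) ^ (-α))
    (σ1 : ℝ) (p1 : Fin n → ℝ) (q1 : Fin m → ℝ)
    (hσpos : 0 < σ1)
    (hp1 : enormL2 p1 = 1)
    (hYp : Yᵀ.mulVec p1 = σ1 • q1) :
    ∑ i ∈ Finset.univ.filter (fun i : Fin m => (i : ℕ) ≠ 0), q1 i ^ 2
      ≤ rmax * (zetaR α - 1) / σ1 ^ 2 := by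
  have hentry (i : Fin m) : (σ1 * q1 i) ^ 2 ≤ r i := by
    have h := sq_transpose_mulVec_le_colSum_mul Y hbin p1 i
    rwa [hYp, ← hrdef, sum_sq_eq_one_of_enormL2_eq_one hp1, mul_one] at h
  set tail := univ.filter fun i : Fin m => (i : ℕ) ≠ 0
  rw [le_div_iff₀ (by positivity), sum_mul]
  calc ∑ i ∈ tail, q1 i ^ 2 * σ1 ^ 2 = ∑ i ∈ tail, (σ1 * q1 i) ^ 2 := by
        simp only [mul_pow, mul_comm]
    _ ≤ ∑ i ∈ tail, r i := sum_le_sum fun i _ => hentry i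
    _ = rmax * ∑ i ∈ tail, (((i : ℕ) : ℝ) + 1) ^ (-α) := by simp only [hpow, mul_sum]
    _ ≤ rmax * (zetaR α - 1) := by
        gcongr
        exact sum_fin_rpow_le_zetaR_sub_one hα m

/-- Let `Y ∈ {0,1}^{n×m}` be a binary matrix whose column-sum vector
`r = Yᵀe` satisfies the power law `r_g = r_max · g^(−α)` with `r_max > 0` and `α > 1`,
and let `(σ1, p1, q1)` be a principal singular triple of `Y` with `σ1 > 0`.  Then the
entries of `q1` other than the first (the most popular item, `g = 1`) satisfy
`Σ_{i=2}^m q_{1i}² ≤ r_max(ζ(α) − 1)/σ1²`. -/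
theorem tail_entries_q1_bound
    (n m : ℕ) (Y : Matrix (Fin n) (Fin m) ℝ)
    (hbin : ∀ u i, Y u i = 0 ∨ Y u i = 1)
    (α rmax : ℝ) (hα : 1 < α) (hrmax : 0 < rmax)
    (r : Fin m → ℝ) (hrdef : r = Yᵀ.mulVec (fun _ => 1))
    (hpow : ∀ g : Fin m, r g = rmax * (((g : ℕ) : ℝ) + 1) ^ (-α))
    (σ1 : ℝ) (p1 : Fin n → ℝ) (q1 : Fin m → ℝ)
    (hσpos : 0 < σ1)
    (hop : ∀ q : Fin m → ℝ, enormL2 q = 1 → enormL2 (Y.mulVec q) ≤ σ1)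
    (hp1 : enormL2 p1 = 1) (hq1 : enormL2 q1 = 1)
    (hYq : Y.mulVec q1 = σ1 • p1) (hYp : Yᵀ.mulVec p1 = σ1 • q1) :
    ∑ i ∈ Finset.univ.filter (fun i : Fin m => (i : ℕ) ≠ 0), q1 i ^ 2
      ≤ rmax * (zetaR α - 1) / σ1 ^ 2 :=
  tail_entries_q1_bound_general n m Y hbin α rmax hα hrmax r hrdef hpow σ1 p1 q1 hσpos hp1 hYp
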